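/- For n ≥ 2, the intermediate rank of A^+(B_n) is at least 2n: the set consisting of the n-support maps (2,3;id), (3,4;id), …, (n-1,n;id), (n,1;id), the maps (1,2;τ) for each adjacent transposition τ = (i, i+1) (1 ≤ i ≤ n-1), together with ξ_{(1,1)} and the singleton-support map ((1,1)→(1,1)), is an independent generating set of A^+(B_n) of cardinality 2n. -/

import Mathlib

def Bn (n : ℕ) : Type := Option (Fin n × Fin n)

def Bn.mul {n : ℕ} : Bn n → Bn n → Bn n
  | some (i, j), some (k, l) => if j = k then some (i, l) else none
  | _, _ => none

instance (n : ℕ) : Mul (Bn n) := ⟨Bn.mul⟩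

instance (n : ℕ) : Semigroup (Bn n) where
  mul_assoc a b c := by
    show Bn.mul (Bn.mul a b) c = Bn.mul a (Bn.mul b c)
    rcases a with _ | ⟨i, j⟩ <;> rcases b with _ | ⟨k, l⟩ <;> rcases c with _ | ⟨p, q⟩
    all_goals try exact rfl
    · show Bn.mul (if j = k then some (i, l) else none) none = none
      by_cases h1 : j = k
      · erw [if_pos h1]; exact rfl
      · erw [if_neg h1]; exact rfl
    · show Bn.mul (if j = k then some (i, l) else none) (some (p, q)) =
        Bn.mul (some (i, j)) (if l = p then some (k, q) else none)
      by_cases h1 : j = k <;> by_cases h2 : l = p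
      · erw [if_pos h1, if_pos h2]
        show (if l = p then some (i, q) else none) = (if j = k then some (i, q) else none)
        erw [if_pos h1, if_pos h2]
      · erw [if_pos h1, if_neg h2]
        show (if l = p then some (i, q) else none) = none
        erw [if_neg h2]
      · erw [if_neg h1, if_pos h2]
        show none = (if j = k then some (i, q) else none)
        erw [if_neg h1]
      · erw [if_neg h1, if_neg h2]
        exact rfl

/-- Maps on `Bn n`, composed left-to-right: `x (f * g) = (x f) g`. -/
def MapBn (n : ℕ) : Type := Bn n → Bn n

instance (n : ℕ) : Monoid (MapBn n) where
  mul f g := fun x => g (f x)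
  one := fun x => x
  mul_assoc _ _ _ := rfl
  one_mul _ := rfl
  mul_one _ := rfl

/-- The constant map `ξ_c`. -/
def constMap (n : ℕ) (c : Bn n) : MapBn n := fun _ => c

/-- The `n`-support map `(p, q; σ)`, sending `(i, p) ↦ (iσ, q)` and all else to `θ`. -/
def nSuppMap (n : ℕ) (p q : Fin n) (σ : Equiv.Perm (Fin n)) : MapBn n :=
  fun x =>
    match x with
    | some (i, j) => if j = p then some (σ i, q) else none
    | none => none

instance (n : ℕ) : DecidableEq (Bn n) :=
  inferInstanceAs (DecidableEq (Option (Fin n × Fin n)))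

/-- The singleton-support map `((k,l) → (p,q))`. -/
def sglMap (n : ℕ) (k l p q : Fin n) : MapBn n :=
  fun x => @ite _ (x = some (k, l)) (instDecidableEqBn n x (some (k, l))) (some (p, q)) none

/-- The multiplicative semigroup reduct `A⁺(Bₙ)`, as a set of maps on `Bn n`. -/
def APlus (n : ℕ) : Set (MapBn n) :=
  {f | (∃ c, f = constMap n c) ∨ (∃ p q σ, f = nSuppMap n p q σ) ∨
       (∃ k l p q, f = sglMap n k l p q)}

/-- Independence of a subset of a semigroup. -/
def IndependentIn {S : Type*} [Semigroup S] (U : Set S) : Prop :=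
  ∀ a ∈ U, a ∉ Subsemigroup.closure (U \ {a})

/-
The generators reach everything through the cycle of columns `0 → 1 → ⋯ → n-1 → 0`
(indices from `0`). The maps `(i, i+1; 1)`, `i ≠ 0`, compose along `1 → 2 → ⋯ → n-1 → 0`
to `(1, 0; 1)`; composing `(0, 1; (i i+1))` with it gives `(0, 0; (i i+1))`, and adjacent
transpositions generate `Sₙ`, so every `(0, 0; σ)` is generated. Then so is `(0, 1; 1)`, hence
every edge `(i, i+1; 1)` of the cycle, every `(p, q; 1)`, and every
`(p, q; σ) = (p, 0; 1)(0, 0; σ)(0, q; 1)`. Multiplying `ξ_(0,0)` and `((0,0) → (0,0))` by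
`n`-support maps gives the other constant and singleton-support maps.

For independence, each generator lies outside a subsemigroup containing all the others: the
constant and singleton-support maps together with the `(p, q; σ)` with `p ≠ i`, for
`(i, i+1; 1)`, or with `σ {0, …, i} ⊆ {0, …, i}`, for `(0, 1; (i i+1))`; the maps fixing
`θ`, for `ξ_(0,0)`; the constant and `n`-support maps, for `((0,0) → (0,0))`.
-/
theorem Set.ncard_setOf_ne {α : Type*} [Finite α] (a : α) :
    {x | x ≠ a}.ncard = Nat.card α - 1 := by
  rw [← Set.compl_singleton_eq, Set.ncard_compl, Set.ncard_singleton]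

namespace Fin

open Fin.NatCast

variable {n : ℕ} [NeZero n] {r : Fin n → Fin n → Prop} [IsTrans (Fin n) r]

theorem rel_one_zero_of_forall_ne_zero (hn : 1 < n) (h : ∀ i, i ≠ 0 → r i (i + 1)) :
    r 1 0 := by
  have hr : Relation.TransGen (fun a b : ℕ => r a b) 1 n := by
    refine transGen_of_succ_of_lt _ (fun i hi => ?_) hn
    have hi0 : (i : Fin n) ≠ 0 := by
      rw [Ne, Fin.natCast_eq_zero]
      exact Nat.not_dvd_of_pos_of_lt (Set.mem_Ico.mp hi).1 (Set.mem_Ico.mp hi).2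
    simpa [Order.succ_eq_add_one] using h i hi0
  simpa [Relation.transGen_eq_self, Function.onFun] using
    hr.lift (fun k : ℕ => (k : Fin n)) fun _ _ => id

theorem rel_of_forall_rel_add_one (h : ∀ i, r i (i + 1)) (p q : Fin n) : r p q := by
  -- the natural number `q + n` reduces to `q` and lies beyond `p`
  have := Nat.rel_of_forall_rel_succ_of_lt r (f := fun k : ℕ => (k : Fin n))
    (fun k => by simpa using h k) (show (p : ℕ) < q + n by omega)
  simpa using this

theorem swap_add_one_mapsTo_Iic {i j : Fin n} (hj : (j : ℕ) + 1 < n) (hji : j ≠ i) :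
    Set.MapsTo (Equiv.swap j (j + 1)) (Set.Iic i) (Set.Iic i) := by
  intro k (hk : k ≤ i)
  have hj' := Fin.val_add_one_of_lt' hj
  have hji' : (j : ℕ) ≠ i := fun h => hji (Fin.ext h)
  simp only [Set.mem_Iic, Fin.le_def] at hk ⊢
  rw [Equiv.swap_apply_def]
  split_ifs with h₁ h₂
  · subst h₁; rw [hj']; omega
  · subst h₂; rw [hj'] at hk; omega
  · exact hk

theorem swap_add_one_injOn :
    Set.InjOn (fun i : Fin n => Equiv.swap i (i + 1)) {i | (i : ℕ) + 1 < n} := by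
  intro i (hi : (i : ℕ) + 1 < n) j (hj : (j : ℕ) + 1 < n) h
  have hij := congrArg (· i) h
  simp only [Equiv.swap_apply_left, Equiv.swap_apply_def] at hij
  have hi' := Fin.val_add_one_of_lt' hi
  have hj' := Fin.val_add_one_of_lt' hj
  split_ifs at hij with h₁ h₂
  · exact h₁
  · rw [Fin.ext_iff, hi'] at hij; rw [Fin.ext_iff, hj'] at h₂; omega
  · rw [Fin.ext_iff, hi'] at hij; omega

end Fin

namespace MapBn

variable {n : ℕ}

instance : Finite (MapBn n) :=
  inferInstanceAs (Finite (Option (Fin n × Fin n) → Option (Fin n × Fin n)))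

/- `MapBn n` is not reducibly a function type, so `simp` cannot rewrite inside applications
`f x` of its elements; pointwise reasoning goes through `toFun` instead. -/
def toFun (f : MapBn n) : Option (Fin n × Fin n) → Option (Fin n × Fin n) := f

@[ext] theorem ext {f g : MapBn n} (h : ∀ x, toFun f x = toFun g x) : f = g := funext h

@[simp] theorem toFun_mul (f g : MapBn n) (x : Option (Fin n × Fin n)) :
    toFun (f * g) x = toFun g (toFun f x) := rfl

theorem constMap_mul (c : Option (Fin n × Fin n)) (f : MapBn n) :
    constMap n c * f = constMap n (toFun f c) := rfl

theorem mul_constMap (f : MapBn n) (c : Option (Fin n × Fin n)) :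
    f * constMap n c = constMap n c := rfl

@[simp] theorem toFun_constMap (c x : Option (Fin n × Fin n)) : toFun (constMap n c) x = c := rfl

@[simp] theorem toFun_nSuppMap_none (p q : Fin n) (σ : Equiv.Perm (Fin n)) :
    toFun (nSuppMap n p q σ) none = none := rfl

@[simp] theorem toFun_nSuppMap_some (p q : Fin n) (σ : Equiv.Perm (Fin n)) (i j : Fin n) :
    toFun (nSuppMap n p q σ) (some (i, j)) = if j = p then some (σ i, q) else none := rfl

@[simp] theorem toFun_sglMap (k l p q : Fin n) (x : Option (Fin n × Fin n)) :
    toFun (sglMap n k l p q) x = if x = some (k, l) then some (p, q) else none := rfl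

theorem nSuppMap_mul_nSuppMap (p q q' r : Fin n) (σ τ : Equiv.Perm (Fin n)) :
    nSuppMap n p q σ * nSuppMap n q' r τ =
      if q = q' then nSuppMap n p r (τ * σ) else constMap n none := by
  ext (_ | ⟨i, j⟩) <;> split_ifs <;> simp_all [apply_ite]

theorem nSuppMap_mul_sglMap (p q k l a b : Fin n) (σ : Equiv.Perm (Fin n)) :
    nSuppMap n p q σ * sglMap n k l a b =
      if q = l then sglMap n (σ.symm k) p a b else constMap n none := by
  ext (_ | ⟨i, j⟩) <;> split_ifs <;> simp_all [Equiv.eq_symm_apply, and_comm]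

theorem sglMap_mul_nSuppMap (k l a b p q : Fin n) (τ : Equiv.Perm (Fin n)) :
    sglMap n k l a b * nSuppMap n p q τ =
      if b = p then sglMap n k l (τ a) q else constMap n none := by
  ext (_ | ⟨i, j⟩) <;> split_ifs <;> simp_all [apply_ite]

theorem sglMap_mul_sglMap (k l a b k' l' a' b' : Fin n) :
    sglMap n k l a b * sglMap n k' l' a' b' =
      if a = k' ∧ b = l' then sglMap n k l a' b' else constMap n none := by
  ext x
  split_ifs <;> simp_all

theorem nSuppMap_inj {p q p' q' : Fin n} {σ τ : Equiv.Perm (Fin n)} :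
    nSuppMap n p q σ = nSuppMap n p' q' τ ↔ p = p' ∧ q = q' ∧ σ = τ := by
  refine ⟨fun h => ?_, by rintro ⟨rfl, rfl, rfl⟩; rfl⟩
  have key : ∀ i, toFun (nSuppMap n p' q' τ) (some (i, p)) = some (σ i, q) := fun i => by
    rw [← h]; simp
  obtain rfl : p = p' := by
    by_contra hp
    simpa [hp] using key p
  simp only [toFun_nSuppMap_some, if_true, Option.some.injEq, Prod.mk.injEq] at key
  exact ⟨rfl, (key p).2.symm, Equiv.ext fun i => (key i).1.symm⟩

theorem constMap_ne_nSuppMap (c : Option (Fin n × Fin n)) (p q : Fin n)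
    (σ : Equiv.Perm (Fin n)) : constMap n c ≠ nSuppMap n p q σ := fun h => by
  have h₁ := congrArg (toFun · none) h
  have h₂ := congrArg (toFun · (some (p, p))) h
  simp only [toFun_constMap, toFun_nSuppMap_none] at h₁ h₂
  simp [h₁] at h₂

theorem constMap_ne_sglMap (c : Option (Fin n × Fin n)) (k l a b : Fin n) :
    constMap n c ≠ sglMap n k l a b := fun h => by
  have h₁ := congrArg (toFun · none) h
  have h₂ := congrArg (toFun · (some (k, l))) h
  simp only [toFun_constMap, toFun_sglMap] at h₁ h₂
  simp [h₁] at h₂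

theorem sglMap_ne_nSuppMap (hn : 1 < n) (k l a b p q : Fin n) (σ : Equiv.Perm (Fin n)) :
    sglMap n k l a b ≠ nSuppMap n p q σ := fun h => by
  have : Nontrivial (Fin n) := Fin.nontrivial_iff_two_le.mpr hn
  obtain ⟨i, hi⟩ := exists_ne k
  have h₁ := congrArg (toFun · (some (i, p))) h
  simp [hi] at h₁

theorem nSuppMap_mul_nSuppMap_self (p q r : Fin n) (σ τ : Equiv.Perm (Fin n)) :
    nSuppMap n p q σ * nSuppMap n q r τ = nSuppMap n p r (τ * σ) := by
  rw [nSuppMap_mul_nSuppMap, if_pos rfl]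

def restrictedAPlus (P : Fin n → Fin n → Equiv.Perm (Fin n) → Prop) (withSgl : Prop)
    (hP : ∀ p q r σ τ, P p q σ → P q r τ → P p r (τ * σ)) : Subsemigroup (MapBn n) where
  carrier := {f | (∃ c, f = constMap n c) ∨ (∃ p q σ, P p q σ ∧ f = nSuppMap n p q σ) ∨
    (withSgl ∧ ∃ k l a b, f = sglMap n k l a b)}
  mul_mem' := by
    rintro f g hf (⟨c, rfl⟩ | ⟨p', q', τ, hτ, rfl⟩ | ⟨hS, k', l', a', b', rfl⟩)
    · exact Or.inl ⟨c, mul_constMap f c⟩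
    · rcases hf with ⟨c, rfl⟩ | ⟨p, q, σ, hσ, rfl⟩ | ⟨hS, k, l, a, b, rfl⟩
      · exact Or.inl ⟨_, constMap_mul c _⟩
      · rw [nSuppMap_mul_nSuppMap]
        split_ifs with h
        · exact Or.inr (Or.inl ⟨p, q', τ * σ, hP _ _ _ _ _ hσ (h ▸ hτ), rfl⟩)
        · exact Or.inl ⟨none, rfl⟩
      · rw [sglMap_mul_nSuppMap]
        split_ifs
        · exact Or.inr (Or.inr ⟨hS, _, _, _, _, rfl⟩)
        · exact Or.inl ⟨none, rfl⟩
    · rcases hf with ⟨c, rfl⟩ | ⟨p, q, σ, -, rfl⟩ | ⟨-, k, l, a, b, rfl⟩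
      · exact Or.inl ⟨_, constMap_mul c _⟩
      · rw [nSuppMap_mul_sglMap]
        split_ifs
        · exact Or.inr (Or.inr ⟨hS, _, _, _, _, rfl⟩)
        · exact Or.inl ⟨none, rfl⟩
      · rw [sglMap_mul_sglMap]
        split_ifs
        · exact Or.inr (Or.inr ⟨hS, _, _, _, _, rfl⟩)
        · exact Or.inl ⟨none, rfl⟩

section restrictedAPlus

variable {P : Fin n → Fin n → Equiv.Perm (Fin n) → Prop} {withSgl : Prop}
  {hP : ∀ p q r σ τ, P p q σ → P q r τ → P p r (τ * σ)}

theorem coe_restrictedAPlus_subset :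
    (restrictedAPlus P withSgl hP : Set (MapBn n)) ⊆ APlus n := by
  rintro f (hc | ⟨p, q, σ, -, rfl⟩ | ⟨-, hs⟩)
  exacts [Or.inl hc, Or.inr (Or.inl ⟨p, q, σ, rfl⟩), Or.inr (Or.inr hs)]

theorem constMap_mem_restrictedAPlus (c : Option (Fin n × Fin n)) :
    constMap n c ∈ restrictedAPlus P withSgl hP :=
  Or.inl ⟨c, rfl⟩

theorem nSuppMap_mem_restrictedAPlus_iff (hn : 1 < n) {p q : Fin n} {σ : Equiv.Perm (Fin n)} :
    nSuppMap n p q σ ∈ restrictedAPlus P withSgl hP ↔ P p q σ := by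
  refine ⟨?_, fun h => Or.inr (Or.inl ⟨p, q, σ, h, rfl⟩)⟩
  rintro (⟨c, h⟩ | ⟨p', q', σ', hP', h⟩ | ⟨-, k, l, a, b, h⟩)
  · exact absurd h.symm (constMap_ne_nSuppMap c p q σ)
  · obtain ⟨rfl, rfl, rfl⟩ := nSuppMap_inj.mp h
    exact hP'
  · exact absurd h.symm (sglMap_ne_nSuppMap hn k l a b p q σ)

theorem sglMap_mem_restrictedAPlus_iff (hn : 1 < n) {k l a b : Fin n} :
    sglMap n k l a b ∈ restrictedAPlus P withSgl hP ↔ withSgl := by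
  refine ⟨?_, fun h => Or.inr (Or.inr ⟨h, k, l, a, b, rfl⟩)⟩
  rintro (⟨c, h⟩ | ⟨p, q, σ, -, h⟩ | ⟨h, -⟩)
  · exact absurd h.symm (constMap_ne_sglMap c k l a b)
  · exact absurd h (sglMap_ne_nSuppMap hn k l a b p q σ)
  · exact h

end restrictedAPlus

def fixNone (n : ℕ) : Subsemigroup (MapBn n) where
  carrier := {f | toFun f none = none}
  mul_mem' {f g} (hf : toFun f none = none) (hg : toFun g none = none) :=
    show toFun g (toFun f none) = none by rw [hf, hg]

theorem isTrans_nSuppMap_one_mem (S : Subsemigroup (MapBn n)) :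
    IsTrans (Fin n) (fun p q => nSuppMap n p q 1 ∈ S) :=
  ⟨fun p q r (hpq : nSuppMap n p q 1 ∈ S) (hqr : nSuppMap n q r 1 ∈ S) => by
    simpa [nSuppMap_mul_nSuppMap_self] using mul_mem hpq hqr⟩

def genSet (n : ℕ) [NeZero n] : Set (MapBn n) :=
  {f | ∃ i : Fin n, i ≠ 0 ∧ f = nSuppMap n i (i + 1) 1} ∪
  {f | ∃ i : Fin n, (i : ℕ) + 1 < n ∧ f = nSuppMap n 0 1 (Equiv.swap i (i + 1))} ∪
  {constMap n (some (0, 0)), sglMap n 0 0 0 0}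

def loopPerms (S : Subsemigroup (MapBn n)) (p : Fin n) (h : nSuppMap n p p 1 ∈ S) :
    Submonoid (Equiv.Perm (Fin n)) where
  carrier := {σ | nSuppMap n p p σ ∈ S}
  one_mem' := h
  mul_mem' {σ τ} (hσ : nSuppMap n p p σ ∈ S) (hτ : nSuppMap n p p τ ∈ S) :=
    show nSuppMap n p p (σ * τ) ∈ S from
      nSuppMap_mul_nSuppMap_self p p p τ σ ▸ mul_mem hτ hσ

section generation

variable [NeZero n] (hn : 1 < n) {S : Subsemigroup (MapBn n)} (hS : genSet n ⊆ S)

include hn hS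

theorem one_zero_mem : nSuppMap n 1 0 1 ∈ S := by
  have := isTrans_nSuppMap_one_mem S
  exact Fin.rel_one_zero_of_forall_ne_zero (r := fun p q => nSuppMap n p q 1 ∈ S) hn fun i hi =>
    hS (Or.inl (Or.inl ⟨i, hi, rfl⟩))

theorem zero_zero_swap_mem {i : Fin n} (hi : (i : ℕ) + 1 < n) :
    nSuppMap n 0 0 (Equiv.swap i (i + 1)) ∈ S := by
  simpa [nSuppMap_mul_nSuppMap_self] using
    mul_mem (hS (Or.inl (Or.inr ⟨i, hi, rfl⟩))) (one_zero_mem hn hS)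

theorem zero_zero_mem (σ : Equiv.Perm (Fin n)) : nSuppMap n 0 0 σ ∈ S := by
  have h0 : ((0 : Fin n) : ℕ) + 1 < n := by simpa using hn
  have hone : nSuppMap n 0 0 1 ∈ S := by
    simpa [nSuppMap_mul_nSuppMap_self] using
      mul_mem (zero_zero_swap_mem hn hS h0) (zero_zero_swap_mem hn hS h0)
  obtain ⟨m, rfl⟩ : ∃ m, n = m + 1 := ⟨n - 1, by omega⟩
  suffices ⊤ ≤ loopPerms S 0 hone from this (Submonoid.mem_top σ)
  rw [← Equiv.Perm.mclosure_swap_castSucc_succ, Submonoid.closure_le]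
  rintro _ ⟨i, rfl⟩
  change nSuppMap _ 0 0 (Equiv.swap i.castSucc i.succ) ∈ S
  rw [← Fin.coeSucc_eq_succ]
  exact zero_zero_swap_mem hn hS (by simp)

theorem nSuppMap_one_mem (p q : Fin n) : nSuppMap n p q 1 ∈ S := by
  have := isTrans_nSuppMap_one_mem S
  refine Fin.rel_of_forall_rel_add_one (r := fun p q => nSuppMap n p q 1 ∈ S) (fun i => ?_) p q
  rcases eq_or_ne i 0 with rfl | hi
  · have h0 : ((0 : Fin n) : ℕ) + 1 < n := by simpa using hn
    simpa [nSuppMap_mul_nSuppMap_self] using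
      mul_mem (zero_zero_mem hn hS (Equiv.swap 0 1)) (hS (Or.inl (Or.inr ⟨0, h0, rfl⟩)))
  · exact hS (Or.inl (Or.inl ⟨i, hi, rfl⟩))

theorem nSuppMap_mem (p q : Fin n) (σ : Equiv.Perm (Fin n)) : nSuppMap n p q σ ∈ S := by
  simpa [nSuppMap_mul_nSuppMap_self] using
    mul_mem (mul_mem (nSuppMap_one_mem hn hS p 0) (zero_zero_mem hn hS σ))
      (nSuppMap_one_mem hn hS 0 q)

theorem constMap_mem (c : Option (Fin n × Fin n)) : constMap n c ∈ S := by
  have hc : constMap n (some (0, 0)) ∈ S := hS (Or.inr (Or.inl rfl))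
  rcases c with _ | ⟨p, q⟩
  · simpa [constMap_mul, hn.ne'] using mul_mem hc (nSuppMap_mem hn hS 1 0 1)
  · simpa [constMap_mul] using mul_mem hc (nSuppMap_mem hn hS 0 q (Equiv.swap 0 p))

theorem sglMap_mem (k l a b : Fin n) : sglMap n k l a b ∈ S := by
  have hs : sglMap n 0 0 0 0 ∈ S := hS (Or.inr (Or.inr rfl))
  simpa [nSuppMap_mul_sglMap, sglMap_mul_nSuppMap] using
    mul_mem (mul_mem (nSuppMap_mem hn hS l 0 (Equiv.swap k 0)) hs)
      (nSuppMap_mem hn hS 0 b (Equiv.swap 0 a))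

end generation

theorem genSet_diff_subset_restrictedAPlus [NeZero n]
    {P : Fin n → Fin n → Equiv.Perm (Fin n) → Prop} {withSgl : Prop}
    {hP : ∀ p q r σ τ, P p q σ → P q r τ → P p r (τ * σ)} {s : Set (MapBn n)}
    (hA : ∀ i : Fin n, i ≠ 0 → nSuppMap n i (i + 1) 1 ∉ s → P i (i + 1) 1)
    (hB : ∀ i : Fin n, (i : ℕ) + 1 < n → nSuppMap n 0 1 (Equiv.swap i (i + 1)) ∉ s →
      P 0 1 (Equiv.swap i (i + 1)))
    (hsgl : sglMap n 0 0 0 0 ∉ s → withSgl) :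
    genSet n \ s ⊆ restrictedAPlus P withSgl hP := by
  rintro f ⟨(⟨i, hi, rfl⟩ | ⟨i, hi, rfl⟩) | (rfl | rfl), hf⟩
  · exact Or.inr (Or.inl ⟨_, _, _, hA i hi hf, rfl⟩)
  · exact Or.inr (Or.inl ⟨_, _, _, hB i hi hf, rfl⟩)
  · exact constMap_mem_restrictedAPlus _
  · exact Or.inr (Or.inr ⟨hsgl hf, _, _, _, _, rfl⟩)

theorem coe_closure_genSet [NeZero n] (hn : 1 < n) :
    (Subsemigroup.closure (genSet n) : Set (MapBn n)) = APlus n := by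
  refine subset_antisymm ?_ ?_
  · have h := genSet_diff_subset_restrictedAPlus (n := n) (P := fun _ _ _ => True)
      (withSgl := True) (hP := fun _ _ _ _ _ _ _ => trivial) (s := ∅) (fun _ _ _ => trivial)
      (fun _ _ _ => trivial) (fun _ => trivial)
    rw [Set.sdiff_empty] at h
    exact (SetLike.coe_subset_coe.mpr (Subsemigroup.closure_le.mpr h)).trans
      coe_restrictedAPlus_subset
  · rintro f (⟨c, rfl⟩ | ⟨p, q, σ, rfl⟩ | ⟨k, l, a, b, rfl⟩)
    · exact constMap_mem hn Subsemigroup.subset_closure c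
    · exact nSuppMap_mem hn Subsemigroup.subset_closure p q σ
    · exact sglMap_mem hn Subsemigroup.subset_closure k l a b

section independence

variable [NeZero n]

theorem constMap_notMem_closure :
    constMap n (some (0, 0)) ∉ Subsemigroup.closure (genSet n \ {constMap n (some (0, 0))}) := by
  intro h
  have hsub : genSet n \ {constMap n (some (0, 0))} ⊆ fixNone n := by
    rintro f ⟨(⟨i, -, rfl⟩ | ⟨i, -, rfl⟩) | (rfl | rfl), hf⟩
    exacts [rfl, rfl, absurd rfl hf, rfl]
  have : toFun (constMap n (some (0, 0))) none = none := Subsemigroup.closure_le.mpr hsub h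
  simp at this

variable (hn : 1 < n)
include hn

theorem nSuppMap_add_one_notMem_closure {i : Fin n} (hi : i ≠ 0) :
    nSuppMap n i (i + 1) 1 ∉ Subsemigroup.closure (genSet n \ {nSuppMap n i (i + 1) 1}) := by
  intro h
  have hsub := genSet_diff_subset_restrictedAPlus (s := {nSuppMap n i (i + 1) 1})
    (P := fun p _ _ => p ≠ i) (withSgl := True)
    (hP := fun _ _ _ _ _ h _ => h) (fun j _ hj => by rintro rfl; exact hj rfl)
    (fun _ _ _ => hi.symm)
    (fun _ => trivial)
  exact (nSuppMap_mem_restrictedAPlus_iff hn).mp (Subsemigroup.closure_le.mpr hsub h) rfl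

theorem nSuppMap_swap_notMem_closure {i : Fin n} (hi : (i : ℕ) + 1 < n) :
    nSuppMap n 0 1 (Equiv.swap i (i + 1)) ∉
      Subsemigroup.closure (genSet n \ {nSuppMap n 0 1 (Equiv.swap i (i + 1))}) := by
  intro h
  have hsub := genSet_diff_subset_restrictedAPlus (s := {nSuppMap n 0 1 (Equiv.swap i (i + 1))})
    (P := fun _ _ σ => Set.MapsTo σ (Set.Iic i) (Set.Iic i)) (withSgl := True)
    (hP := fun _ _ _ _ _ hσ hτ => by rw [Equiv.Perm.coe_mul]; exact hτ.comp hσ)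
    (fun _ _ _ => by simpa using Set.mapsTo_id _)
    (fun j hj hji => Fin.swap_add_one_mapsTo_Iic hj (by rintro rfl; exact hji rfl)) (fun _ => trivial)
  have hmaps := (nSuppMap_mem_restrictedAPlus_iff hn).mp (Subsemigroup.closure_le.mpr hsub h)
  have := hmaps (Set.self_mem_Iic (a := i))
  simp [Fin.le_def, Fin.val_add_one_of_lt' hi] at this

theorem sglMap_notMem_closure :
    sglMap n 0 0 0 0 ∉ Subsemigroup.closure (genSet n \ {sglMap n 0 0 0 0}) := by
  intro h
  have hsub := genSet_diff_subset_restrictedAPlus (s := {sglMap n 0 0 0 0})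
    (P := fun _ _ _ => True) (withSgl := False)
    (hP := fun _ _ _ _ _ _ _ => trivial) (fun _ _ _ => trivial) (fun _ _ _ => trivial)
    (fun hs => hs rfl)
  exact (sglMap_mem_restrictedAPlus_iff hn).mp (Subsemigroup.closure_le.mpr hsub h)

theorem independentIn_genSet : IndependentIn (genSet n) := by
  rintro a ((⟨i, hi, rfl⟩ | ⟨i, hi, rfl⟩) | (rfl | rfl))
  · exact nSuppMap_add_one_notMem_closure hn hi
  · exact nSuppMap_swap_notMem_closure hn hi
  · exact constMap_notMem_closure
  · exact sglMap_notMem_closure hn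

end independence

section card

variable [NeZero n]

theorem ncard_genSet (hn : 1 < n) : (genSet n).ncard = 2 * n := by
  set A : Set (MapBn n) := {f | ∃ i : Fin n, i ≠ 0 ∧ f = nSuppMap n i (i + 1) 1}
  set B : Set (MapBn n) :=
    {f | ∃ i : Fin n, (i : ℕ) + 1 < n ∧ f = nSuppMap n 0 1 (Equiv.swap i (i + 1))}
  have hA : A.ncard = n - 1 := by
    rw [show A = (fun i => nSuppMap n i (i + 1) 1) '' {i | i ≠ 0} by ext; simp [A, eq_comm],
      Set.ncard_image_of_injective _ fun i j h => (nSuppMap_inj.mp h).1, Set.ncard_setOf_ne,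
      Nat.card_fin]
  have hB : B.ncard = n - 1 := by
    have hlast : {i : Fin n | (i : ℕ) + 1 < n} = {i | i ≠ ⟨n - 1, by omega⟩} := by
      ext i; simp only [Set.mem_ofPred_eq, ne_eq, Fin.ext_iff]; omega
    rw [show B = (fun i => nSuppMap n 0 1 (Equiv.swap i (i + 1))) '' {i | (i : ℕ) + 1 < n} by
        ext; simp [B, eq_comm],
      Set.InjOn.ncard_image fun i hi j hj h => Fin.swap_add_one_injOn hi hj (nSuppMap_inj.mp h).2.2,
      hlast, Set.ncard_setOf_ne, Nat.card_fin]
  have hAB : Disjoint A B := Set.disjoint_left.mpr <| by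
    rintro _ ⟨i, hi, rfl⟩ ⟨j, -, h⟩
    exact hi (nSuppMap_inj.mp h).1
  have hABC : Disjoint (A ∪ B) {constMap n (some (0, 0)), sglMap n 0 0 0 0} :=
    Set.disjoint_left.mpr <| by
      rintro _ (⟨i, -, rfl⟩ | ⟨i, -, rfl⟩) (h | h)
      exacts [constMap_ne_nSuppMap _ _ _ _ h.symm, sglMap_ne_nSuppMap hn _ _ _ _ _ _ _ h.symm,
        constMap_ne_nSuppMap _ _ _ _ h.symm, sglMap_ne_nSuppMap hn _ _ _ _ _ _ _ h.symm]
  rw [genSet, Set.ncard_union_eq hABC, Set.ncard_union_eq hAB, hA, hB,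
    Set.ncard_pair (constMap_ne_sglMap _ _ _ _ _)]
  omega

end card

end MapBn

theorem intermediate_rank_lb (n : ℕ) [NeZero n] (hn : 2 ≤ n) :
    let X : Set (MapBn n) :=
      {f | ∃ i : Fin n, i ≠ 0 ∧ f = nSuppMap n i (i + 1) 1} ∪
      {f | ∃ i : Fin n, (i : ℕ) + 1 < n ∧ f = nSuppMap n 0 1 (Equiv.swap i (i + 1))} ∪
      {constMap n (some (0, 0)), sglMap n 0 0 0 0}
    IndependentIn X ∧ (Subsemigroup.closure X : Set (MapBn n)) = APlus n ∧
    X.ncard = 2 * n ∧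
    2 * n ≤ sSup {k | ∃ U : Set (MapBn n), U ⊆ APlus n ∧ U.ncard = k ∧
      IndependentIn U ∧ (Subsemigroup.closure U : Set (MapBn n)) = APlus n} := by
  intro X
  have hindep : IndependentIn X := MapBn.independentIn_genSet hn
  have hclosure : (Subsemigroup.closure X : Set (MapBn n)) = APlus n := MapBn.coe_closure_genSet hn
  have hcard : X.ncard = 2 * n := MapBn.ncard_genSet hn
  refine ⟨hindep, hclosure, hcard, le_csSup ⟨Nat.card (MapBn n), ?_⟩ ?_⟩
  · rintro _ ⟨U, -, rfl, -⟩
    exact Set.ncard_le_card U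
  · exact ⟨X, hclosure ▸ Subsemigroup.subset_closure, hcard, hindep, hclosure⟩
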